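/- arXiv:1808.05601 — 4 statements merged into one kernel-verified Lean document; each statement's English description precedes it below -/
import Mathlib

section
/- The standard middle-thirds Cantor set in the real line (viewed as a subset of the complex plane) is uniformly perfect: there exists a constant 0 < k < 1 such that for every point x of the Cantor set and every radius r smaller than the diameter of the Cantor set, the closed annulus {z : k·r ≤ |z − x| ≤ r} intersects the Cantor set. -/
open Metric Set

/-- The standard middle-thirds Cantor set: reals with a ternary expansion
avoiding the digit 1 (equivalently, using only digits 0 and 2). -/
def middleThirdsCantor : Set ℝ :=
  {x | ∃ a : ℕ → ℕ, (∀ n, a n = 0 ∨ a n = 2) ∧ x = ∑' n, (a n : ℝ) / 3 ^ (n + 1)}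

/-- The Cantor set, viewed as a subset of the complex plane. -/
def cantorSetC : Set ℂ := Complex.ofReal '' middleThirdsCantor

/-!
Take `k = 1/3`. Replacing the `n`-th ternary digit `d ∈ {0, 2}` of a point of the Cantor set
by `2 - d` gives another point of the Cantor set at distance exactly `2 / 3 ^ (n + 1)`. These
distances shrink by the factor `3` from one `n` to the next, so for every `0 < r ≤ 2` one of them
lies in `[r / 3, r]`, and `r < diam ≤ 1` is in that range.
-/

open Function Real

lemma digits_div_three_pow_eq_ofDigitsTerm {a : ℕ → ℕ} (ha : ∀ n, a n < 3) :
    (fun n => (a n : ℝ) / 3 ^ (n + 1)) = ofDigitsTerm (fun n => ⟨a n, ha n⟩ : ℕ → Fin 3) := by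
  ext n
  simp [ofDigitsTerm, div_eq_mul_inv]

lemma summable_digits_div_three_pow {a : ℕ → ℕ} (ha : ∀ n, a n < 3) :
    Summable fun n => (a n : ℝ) / 3 ^ (n + 1) := by
  rw [digits_div_three_pow_eq_ofDigitsTerm ha]
  exact summable_ofDigitsTerm

lemma tsum_digits_div_three_pow_mem_Icc {a : ℕ → ℕ} (ha : ∀ n, a n < 3) :
    ∑' n, (a n : ℝ) / 3 ^ (n + 1) ∈ Icc (0 : ℝ) 1 := by
  rw [digits_div_three_pow_eq_ofDigitsTerm ha]
  exact ⟨ofDigits_nonneg _, ofDigits_le_one _⟩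

lemma tsum_update_digit_div_three_pow {a : ℕ → ℕ} (ha : ∀ n, a n < 3) (n d : ℕ) :
    ∑' m, (update a n d m : ℝ) / 3 ^ (m + 1) =
      ((d : ℝ) - a n) / 3 ^ (n + 1) + ∑' m, (a m : ℝ) / 3 ^ (m + 1) := by
  have h := ((summable_digits_div_three_pow ha).hasSum.update n ((d : ℝ) / 3 ^ (n + 1))).tsum_eq
  rw [sub_div, ← h]
  exact tsum_congr fun m => apply_update (fun m (k : ℕ) => (k : ℝ) / 3 ^ (m + 1)) a n d m

lemma digit_lt_three {a : ℕ → ℕ} (ha : ∀ n, a n = 0 ∨ a n = 2) (n : ℕ) : a n < 3 := by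
  rcases ha n with h | h <;> omega

lemma middleThirdsCantor_subset_Icc : middleThirdsCantor ⊆ Icc 0 1 := by
  rintro _ ⟨a, ha, rfl⟩
  exact tsum_digits_div_three_pow_mem_Icc (digit_lt_three ha)

lemma diam_cantorSetC_le_one : diam cantorSetC ≤ 1 := by
  rw [cantorSetC, Complex.isometry_ofReal.diam_image]
  calc diam middleThirdsCantor ≤ diam (Icc (0 : ℝ) 1) :=
        diam_mono middleThirdsCantor_subset_Icc (isBounded_Icc 0 1)
    _ = 1 := by simp [Real.diam_Icc]

lemma exists_mem_middleThirdsCantor_dist_eq {x : ℝ} (hx : x ∈ middleThirdsCantor) (n : ℕ) :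
    ∃ y ∈ middleThirdsCantor, dist y x = 2 / 3 ^ (n + 1) := by
  obtain ⟨a, ha, rfl⟩ := hx
  refine ⟨_, ⟨update a n (2 - a n), fun m => ?_, rfl⟩, ?_⟩
  · rcases eq_or_ne m n with rfl | hm
    · rcases ha m with h | h <;> simp [h]
    · simpa [hm] using ha m
  · rw [dist_eq, tsum_update_digit_div_three_pow (digit_lt_three ha), add_sub_cancel_right]
    rcases ha n with h | h <;> simp [h, abs_div]

lemma exists_two_div_three_pow_mem_Icc {r : ℝ} (hr₀ : 0 < r) (hr₂ : r ≤ 2) :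
    ∃ n : ℕ, 2 / 3 ^ (n + 1) ∈ Icc (r / 3) r := by
  obtain ⟨n, hlt, hle⟩ := exists_nat_pow_near_of_lt_one (half_pos hr₀) (by linarith)
    (by norm_num : (0 : ℝ) < 1 / 3) (by norm_num)
  rw [pow_succ] at hlt
  have h2 : (2 : ℝ) / 3 ^ (n + 1) = 2 * ((1 / 3) ^ n * (1 / 3)) := by
    rw [← pow_succ, one_div_pow, mul_one_div]
  exact ⟨n, by linarith, by linarith⟩

theorem cantorSet_uniformly_perfect :
    ∃ k : ℝ, 0 < k ∧ k < 1 ∧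
      ∀ x ∈ cantorSetC, ∀ r : ℝ, 0 < r → r < Metric.diam cantorSetC →
        ({z : ℂ | k * r ≤ dist z x ∧ dist z x ≤ r} ∩ cantorSetC).Nonempty := by
  refine ⟨1 / 3, by norm_num, by norm_num, ?_⟩
  rintro _ ⟨x, hx, rfl⟩ r hr₀ hr
  obtain ⟨n, hn⟩ := exists_two_div_three_pow_mem_Icc hr₀ (by linarith [diam_cantorSetC_le_one])
  obtain ⟨y, hy, hyx⟩ := exists_mem_middleThirdsCantor_dist_eq hx n
  refine ⟨y, ⟨?_, ?_⟩, mem_image_of_mem _ hy⟩ <;>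
    rw [Complex.isometry_ofReal.dist_eq, hyx] <;> linarith [hn.1, hn.2]
end

section
/- The map φ(z) = e^z / (e^z + 1) from ℂ \ {(2n+1)πi : n ∈ ℤ} to ℂ \ {0, 1} is a covering map. -/
/-!
`exp z / (exp z + 1)` is `m ∘ exp` with `m u = u / (u + 1)`, a Möbius transformation restricting
to a homeomorphism `ℂ ∖ {0, -1} ≃ₜ ℂ ∖ {0, 1}` with inverse `w ↦ w / (1 - w)`. Since `exp` covers
`ℂ ∖ {0}`, it covers `ℂ ∖ {0, -1}`, and composing with a homeomorphism of the base keeps it a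
covering. The excluded points `(2n+1)πi` are exactly `exp⁻¹ {-1}`, so `log (m⁻¹ w)` avoids them.
-/

open Set Complex

theorem IsCoveringMapOn.comp_of_homeomorph {E X Y : Type*} [TopologicalSpace E]
    [TopologicalSpace X] [TopologicalSpace Y] {f : E → X} {g : X → Y} {s : Set X} {t : Set Y}
    (hf : IsCoveringMapOn f s) (hs : IsOpen s) (ht : IsOpen t) (e : s ≃ₜ t)
    (hge : ∀ x : s, g x = e x) (hgt : g ⁻¹' t ⊆ s) :
    IsCoveringMapOn (g ∘ f) t := by
  have hpre : (g ∘ f) ⁻¹' t = f ⁻¹' s :=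
    (preimage_comp ..).trans <| congrArg _ <| hgt.antisymm fun x hx ↦ by simp [hge ⟨x, hx⟩]
  have hopen : IsOpen ((g ∘ f) ⁻¹' t) := hpre ▸ isOpen_iff_mem_nhds.mpr fun x hx ↦
    (hf.continuousAt hx).preimage_mem_nhds (hs.mem_nhds hx)
  refine .of_isCoveringMap_restrictPreimage _ ht hopen ?_
  convert (hf.isCoveringMap_restrictPreimage.homeomorph_comp e).comp_homeomorph
    (Homeomorph.setCongr hpre) using 1
  ext x
  exact hge (s.restrictPreimage f (Homeomorph.setCongr hpre x))

lemma div_add_one_ne_zero_and_ne_one {u : ℂ} (hu : u ≠ 0 ∧ u ≠ -1) :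
    u / (u + 1) ≠ 0 ∧ u / (u + 1) ≠ 1 := by
  have hu₁ : u + 1 ≠ 0 := by grind
  refine ⟨div_ne_zero hu.1 hu₁, ?_⟩
  rw [Ne, div_eq_one_iff_eq hu₁]
  grind

lemma div_one_sub_ne_zero_and_ne_neg_one {w : ℂ} (hw : w ≠ 0 ∧ w ≠ 1) :
    w / (1 - w) ≠ 0 ∧ w / (1 - w) ≠ -1 := by
  have hw₁ : 1 - w ≠ 0 := sub_ne_zero.mpr hw.2.symm
  refine ⟨div_ne_zero hw.1 hw₁, ?_⟩
  rw [Ne, div_eq_iff hw₁]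
  grind

-- `u = -1` has to be ruled out separately only because of the junk value `-1 / 0 = 0`.
lemma ne_zero_and_ne_neg_one_of_div_add_one_ne_zero {u : ℂ} (hu : u / (u + 1) ≠ 0) :
    u ≠ 0 ∧ u ≠ -1 := by
  constructor <;> rintro rfl <;> simp at hu

noncomputable def divAddOneHomeomorph :
    {u : ℂ | u ≠ 0 ∧ u ≠ -1} ≃ₜ {w : ℂ | w ≠ 0 ∧ w ≠ 1} where
  toFun u := ⟨u / (u + 1), div_add_one_ne_zero_and_ne_one u.2⟩
  invFun w := ⟨w / (1 - w), div_one_sub_ne_zero_and_ne_neg_one w.2⟩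
  left_inv u := by
    have : (u : ℂ) + 1 ≠ 0 := by grind
    ext
    field_simp
    ring
  right_inv w := by
    have : 1 - (w : ℂ) ≠ 0 := by grind
    ext
    field_simp
    ring
  continuous_toFun := by fun_prop (disch := exact fun u ↦ by grind)
  continuous_invFun := by fun_prop (disch := exact fun w ↦ by grind)

lemma exp_two_mul_int_add_one_mul_pi_mul_I (n : ℤ) :
    exp ((2 * n + 1) * Real.pi * I) = -1 := by
  rw [show (2 * n + 1) * Real.pi * I = n * (2 * Real.pi * I) + Real.pi * I by ring, exp_add,
    exp_int_mul_two_pi_mul_I, one_mul, exp_pi_mul_I]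

theorem exp_over_exp_add_one_coveringMap :
    IsCoveringMapOn (fun z : ℂ => Complex.exp z / (Complex.exp z + 1))
      {w : ℂ | w ≠ 0 ∧ w ≠ 1} ∧
    ∀ w : ℂ, w ≠ 0 → w ≠ 1 →
      ∃ z : ℂ, (∀ n : ℤ, z ≠ (2 * (n : ℂ) + 1) * Real.pi * Complex.I) ∧
        Complex.exp z / (Complex.exp z + 1) = w := by
  have hexp : IsCoveringMapOn exp {u : ℂ | u ≠ 0 ∧ u ≠ -1} :=
    isCoveringMapOn_exp.mono fun _ hu ↦ hu.1
  refine ⟨hexp.comp_of_homeomorph (isOpen_ne.inter isOpen_ne) (isOpen_ne.inter isOpen_ne)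
    divAddOneHomeomorph (fun _ ↦ rfl)
    fun _ hu ↦ ne_zero_and_ne_neg_one_of_div_add_one_ne_zero hu.1, fun w h0 h1 ↦ ?_⟩
  set u := divAddOneHomeomorph.symm ⟨w, h0, h1⟩
  refine ⟨log u, fun n hn ↦ u.2.2 ?_, ?_⟩
  · rw [← exp_log u.2.1, hn, exp_two_mul_int_add_one_mul_pi_mul_I]
  · rw [exp_log u.2.1]
    exact congrArg Subtype.val (divAddOneHomeomorph.apply_symm_apply _)
end

section
/- There exists a constant K with 0 < K < π such that for all 0 < r ≤ K, for all integers n, and for all z with |z| ≤ r and z ≠ 0: (1/(2|z|)) ≤ |e^{(2n+1)πi + z}/(e^{(2n+1)πi + z} + 1)| ≤ 2/|z|. Consequently, writing φ(w) = e^w/(e^w+1): the image under φ of the union of punctured balls ⋃ₙ (B((2n+1)πi, r) \ {(2n+1)πi}) is contained in ℂ \ B(0, 1/(2r)), and the image under φ of ℂ \ ⋃ₙ B((2n+1)πi, r) is contained in B(0, 2/r). -/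
open Metric Set Complex

/-! Since `exp ((2n+1)πi + z) = -exp z`, the map `φ` near the pole `(2n+1)πi` is
`exp z / (exp z - 1)`. For small `z`, `exp z - 1 = z + O(‖z‖²)` gives `‖φ‖ ≈ 1/‖z‖`. Away from the
poles, after a translation by a multiple of `2πi` the point lies in the strip `|Im z| ≤ π`, where the
only zero of `exp z - 1` is `0`: there `exp z / (exp z - 1)` is bounded on the compact part
`|Re z| ≤ 1` and by `2` where `|Re z| ≥ 1`. Taking `K` small makes both bounds fit under `2 / r`. -/

lemma exp_odd_mul_pi_mul_I_add (n : ℤ) (z : ℂ) :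
    exp ((2 * (n : ℂ) + 1) * Real.pi * I + z) = -exp z := by
  rw [show (2 * (n : ℂ) + 1) * Real.pi * I + z = n * (2 * Real.pi * I) + (Real.pi * I + z) by ring,
    exp_add, exp_int_mul_two_pi_mul_I, one_mul, exp_add, exp_pi_mul_I, neg_one_mul]

lemma exp_odd_mul_pi_mul_I_add_div (n : ℤ) (z : ℂ) :
    exp ((2 * (n : ℂ) + 1) * Real.pi * I + z) / (exp ((2 * (n : ℂ) + 1) * Real.pi * I + z) + 1) =
      exp z / (exp z - 1) := by
  rw [exp_odd_mul_pi_mul_I_add, ← neg_div_neg_eq, neg_neg, neg_add, neg_neg, ← sub_eq_add_neg]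

lemma exists_abs_im_sub_odd_mul_pi_mul_I_le (w : ℂ) :
    ∃ n : ℤ, |(w - (2 * (n : ℂ) + 1) * Real.pi * I).im| ≤ Real.pi := by
  have h2pi : 0 < 2 * Real.pi := Real.two_pi_pos
  refine ⟨⌊w.im / (2 * Real.pi)⌋, ?_⟩
  have hlo := (le_div_iff₀ h2pi).mp (Int.floor_le (w.im / (2 * Real.pi)))
  have hhi := (div_lt_iff₀ h2pi).mp (Int.lt_floor_add_one (w.im / (2 * Real.pi)))
  simp only [sub_im, mul_im, add_re, mul_re, ofReal_re, ofReal_im, I_re, I_im, intCast_re,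
    intCast_im, re_ofNat, im_ofNat, one_re, one_im, add_im, mul_im]
  rw [abs_le]
  constructor <;> nlinarith

lemma abs_norm_exp_sub_one_sub_norm_le {z : ℂ} (hz : ‖z‖ ≤ 1) :
    |‖exp z - 1‖ - ‖z‖| ≤ ‖z‖ ^ 2 :=
  (abs_norm_sub_norm_le _ _).trans (norm_exp_sub_one_sub_id_le hz)

lemma norm_exp_div_exp_sub_one_near_zero {z : ℂ} (hz₀ : z ≠ 0) (hz : ‖z‖ ≤ 1 / 5) :
    1 / (2 * ‖z‖) ≤ ‖exp z / (exp z - 1)‖ ∧ ‖exp z / (exp z - 1)‖ ≤ (31 / 20) / ‖z‖ := by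
  have hs : 0 < ‖z‖ := norm_pos_iff.mpr hz₀
  have ha := abs_le.mp (abs_norm_exp_sub_one_sub_norm_le (hz.trans (by norm_num)))
  have hb := abs_le.mp (abs_norm_sub_norm_le (exp z) 1)
  rw [norm_one] at hb
  have ha₀ : 0 < ‖exp z - 1‖ := by nlinarith
  rw [norm_div, div_le_div_iff₀ (by positivity) ha₀, div_le_div_iff₀ ha₀ hs]
  constructor <;> nlinarith

lemma exp_sub_one_ne_zero_of_abs_im_le {z : ℂ} (hz₀ : z ≠ 0) (hz : |z.im| ≤ Real.pi) :
    exp z - 1 ≠ 0 := by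
  rw [sub_ne_zero, Ne, Complex.exp_eq_one_iff]
  rintro ⟨n, rfl⟩
  have him : (n * (2 * Real.pi * I) : ℂ).im = n * (2 * Real.pi) := by simp
  rw [him, abs_mul, abs_of_pos Real.two_pi_pos] at hz
  have hn : |n| < 1 := by
    have : |(n : ℝ)| < 1 := by nlinarith [Real.pi_pos]
    exact_mod_cast this
  simp [Int.abs_lt_one_iff.mp hn] at hz₀

lemma norm_exp_le_two_mul_norm_exp_sub_one {z : ℂ} (hz : 1 ≤ |z.re|) :
    ‖exp z‖ ≤ 2 * ‖exp z - 1‖ := by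
  have h := abs_le.mp ((abs_norm_sub_norm_le (exp z) 1).trans_eq' (by rw [norm_one]))
  rw [norm_exp] at h ⊢
  rcases le_abs'.mp hz with hx | hx
  · have : Real.exp z.re ≤ Real.exp (-1) := Real.exp_le_exp.mpr hx
    linarith [Real.exp_neg_one_lt_half]
  · linarith [Real.add_one_le_exp z.re]

lemma exists_norm_exp_div_exp_sub_one_le_of_abs_im_le {δ : ℝ} (hδ : 0 < δ) :
    ∃ C > 0, ∀ z : ℂ, |z.im| ≤ Real.pi → δ ≤ ‖z‖ → ‖exp z / (exp z - 1)‖ ≤ C := by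
  set S : Set ℂ := (Icc (-1) 1 ×ℂ Icc (-Real.pi) Real.pi) ∩ {z | δ ≤ ‖z‖}
  have hS : IsCompact S :=
    (isCompact_Icc.reProdIm isCompact_Icc).inter_right (isClosed_le continuous_const continuous_norm)
  have hcont : ContinuousOn (fun z => exp z / (exp z - 1)) S := by
    refine continuous_exp.continuousOn.div (continuous_exp.sub continuous_const).continuousOn ?_
    rintro z ⟨hz, hzδ⟩
    refine exp_sub_one_ne_zero_of_abs_im_le ?_ (abs_le.mpr hz.2)
    rintro rfl
    exact hδ.not_ge (by simpa using hzδ)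
  obtain ⟨C₀, hC₀⟩ := hS.exists_bound_of_continuousOn hcont
  refine ⟨max C₀ 2, by positivity, fun z hzim hzδ => ?_⟩
  by_cases hre : |z.re| ≤ 1
  · exact (hC₀ z ⟨⟨abs_le.mp hre, abs_le.mp hzim⟩, hzδ⟩).trans (le_max_left _ _)
  · have h := norm_exp_le_two_mul_norm_exp_sub_one (le_of_not_ge hre)
    rw [norm_div]
    refine (div_le_of_le_mul₀ (norm_nonneg _) (by positivity) ?_).trans (le_max_right _ _)
    linarith

lemma exists_norm_exp_div_exp_sub_one_lt :
    ∃ K, 0 < K ∧ K ≤ 1 / 5 ∧ ∀ r, 0 < r → r ≤ K → ∀ z : ℂ, |z.im| ≤ Real.pi → r ≤ ‖z‖ →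
      ‖exp z / (exp z - 1)‖ < 2 / r := by
  obtain ⟨C, hC, hCbound⟩ := exists_norm_exp_div_exp_sub_one_le_of_abs_im_le (δ := 1 / 5) (by norm_num)
  refine ⟨min (1 / 5) C⁻¹, by positivity, min_le_left _ _, fun r hr hrK z hzim hrz => ?_⟩
  rcases le_or_gt ‖z‖ (1 / 5) with hz | hz
  · have hz₀ : z ≠ 0 := norm_pos_iff.mp (hr.trans_le hrz)
    calc ‖exp z / (exp z - 1)‖ ≤ (31 / 20) / ‖z‖ := (norm_exp_div_exp_sub_one_near_zero hz₀ hz).2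
      _ ≤ (31 / 20) / r := by gcongr
      _ < 2 / r := by gcongr; norm_num
  · calc ‖exp z / (exp z - 1)‖ ≤ C := hCbound z hzim hz.le
      _ ≤ 1 / r := by rw [one_div]; exact (le_inv_comm₀ hr hC).mp (hrK.trans (min_le_right _ _))
      _ < 2 / r := by gcongr; norm_num

theorem exp_map_near_poles_estimate :
    ∃ K : ℝ, 0 < K ∧ K < Real.pi ∧ ∀ r : ℝ, 0 < r → r ≤ K →
      (∀ n : ℤ, ∀ z : ℂ, z ≠ 0 → ‖z‖ ≤ r →
        1 / (2 * ‖z‖) ≤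
          ‖Complex.exp ((2 * (n : ℂ) + 1) * Real.pi * Complex.I + z) /
            (Complex.exp ((2 * (n : ℂ) + 1) * Real.pi * Complex.I + z) + 1)‖ ∧
        ‖Complex.exp ((2 * (n : ℂ) + 1) * Real.pi * Complex.I + z) /
            (Complex.exp ((2 * (n : ℂ) + 1) * Real.pi * Complex.I + z) + 1)‖ ≤ 2 / ‖z‖) ∧
      (∀ w : ℂ,
        (∃ n : ℤ, w ∈ Metric.ball ((2 * (n : ℂ) + 1) * Real.pi * Complex.I) r ∧
          w ≠ (2 * (n : ℂ) + 1) * Real.pi * Complex.I) →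
        Complex.exp w / (Complex.exp w + 1) ∉ Metric.ball (0 : ℂ) (1 / (2 * r))) ∧
      (∀ w : ℂ,
        (∀ n : ℤ, w ∉ Metric.ball ((2 * (n : ℂ) + 1) * Real.pi * Complex.I) r) →
        Complex.exp w / (Complex.exp w + 1) ∈ Metric.ball (0 : ℂ) (2 / r)) := by
  obtain ⟨K, hK, hK5, hfar⟩ := exists_norm_exp_div_exp_sub_one_lt
  refine ⟨K, hK, hK5.trans_lt (by linarith [Real.pi_gt_three]), fun r hr hrK => ⟨?_, ?_, ?_⟩⟩
  · intro n z hz₀ hzr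
    rw [exp_odd_mul_pi_mul_I_add_div]
    obtain ⟨hlow, hup⟩ := norm_exp_div_exp_sub_one_near_zero hz₀ (hzr.trans (hrK.trans hK5))
    exact ⟨hlow, hup.trans (by gcongr; norm_num)⟩
  · rintro w ⟨n, hw, hwn⟩
    rw [mem_ball_iff_norm] at hw
    rw [mem_ball_zero_iff, not_lt, ← add_sub_cancel ((2 * (n : ℂ) + 1) * Real.pi * I) w,
      exp_odd_mul_pi_mul_I_add_div]
    have hz₀ := sub_ne_zero.mpr hwn
    refine le_trans ?_ (norm_exp_div_exp_sub_one_near_zero hz₀ (hw.le.trans (hrK.trans hK5))).1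
    gcongr
  · intro w hw
    obtain ⟨n, hn⟩ := exists_abs_im_sub_odd_mul_pi_mul_I_le w
    rw [mem_ball_zero_iff, ← add_sub_cancel ((2 * (n : ℂ) + 1) * Real.pi * I) w,
      exp_odd_mul_pi_mul_I_add_div]
    exact hfar r hr hrK _ hn (not_lt.mp (mem_ball_iff_norm.not.mp (hw n)))
end

section
/- Suppose A, B ⊆ ℂ are closed sets such that A is contained in the open upper half-plane {z : Im z > 0} and B is contained in the open lower half-plane {z : Im z < 0}. Then for any point (x, y) = x + iy in Equi(A, B) with y > 0, the vertical segment from x to x + iy is disjoint from A ∪ B; consequently Equi(A, B) is homotopic into the real axis within ℂ \ (A ∪ B) by the straight-line vertical homotopy (x + iy, s) ↦ x + i(1−s)y, which avoids A ∪ B for all s ∈ [0,1] whenever x + iy ∈ Equi(A,B). -/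
/-!
If `x + it` with `0 < t ≤ y` lay in `A`, then `dist(x + iy, A) ≤ y - t < y`, while every point
of the lower half-plane is at distance at least `y` from `x + iy`; so `x + iy` would be strictly
closer to `A` than to `B`. Points of `B` on the segment (when `y < 0`) are excluded by the same
argument after reflecting in the real axis, which swaps the roles of `A` and `B`.
-/

open Metric Set ComplexConjugate

namespace Complex

lemma im_le_infDist_of_forall_im_nonpos {B : Set ℂ} (hB : B.Nonempty)
    (hBlow : ∀ b ∈ B, b.im ≤ 0) (z : ℂ) : z.im ≤ infDist z B := by
  refine (le_infDist hB).2 fun b hb => ?_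
  calc z.im ≤ z.im - b.im := by linarith [hBlow b hb]
    _ ≤ |(z - b).im| := by rw [sub_im]; exact le_abs_self _
    _ ≤ dist z b := by rw [dist_eq]; exact abs_im_le_norm _

lemma infDist_lt_im_of_mem {A : Set ℂ} {z p : ℂ} (hp : p ∈ A) (hre : p.re = z.re)
    (hpos : 0 < p.im) (hle : p.im ≤ z.im) : infDist z A < z.im :=
  calc infDist z A ≤ dist z p := infDist_le_dist_of_mem hp
    _ = z.im - p.im := by rw [dist_of_re_eq hre.symm, Real.dist_eq, abs_of_nonneg (by linarith)]
    _ < z.im := by linarith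

lemma infDist_ne_of_mem_of_re_eq {A B : Set ℂ} (hBne : B.Nonempty)
    (hBlow : ∀ b ∈ B, b.im ≤ 0) {z p : ℂ} (hp : p ∈ A) (hre : p.re = z.re)
    (hpos : 0 < p.im) (hle : p.im ≤ z.im) : infDist z A ≠ infDist z B :=
  (infDist_lt_im_of_mem hp hre hpos hle).trans_le
    (im_le_infDist_of_forall_im_nonpos hBne hBlow z) |>.ne

lemma ofReal_add_mul_I_notMem_of_infDist_eq {A B : Set ℂ}
    (hAne : A.Nonempty) (hBne : B.Nonempty)
    (hAup : ∀ z ∈ A, 0 < z.im) (hBlow : ∀ z ∈ B, z.im < 0)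
    {z : ℂ} (heq : infDist z A = infDist z B) {t : ℝ} (ht : t ∈ uIcc 0 z.im) :
    (z.re : ℂ) + t * I ∉ A ∪ B := by
  set p : ℂ := (z.re : ℂ) + t * I
  have hre : p.re = z.re := by simp [p]
  have him : p.im = t := by simp [p]
  rintro (hpA | hpB)
  · have hpos : 0 < t := him ▸ hAup p hpA
    have hle : t ≤ z.im := by rcases mem_uIcc.1 ht with h | h <;> linarith [h.1, h.2]
    exact infDist_ne_of_mem_of_re_eq hBne (fun b hb => (hBlow b hb).le) hpA hre
      (him ▸ hpos) (him ▸ hle) heq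
  · have hneg : t < 0 := him ▸ hBlow p hpB
    have hge : z.im ≤ t := by rcases mem_uIcc.1 ht with h | h <;> linarith [h.1, h.2]
    refine infDist_ne_of_mem_of_re_eq (A := conj '' B) (B := conj '' A) (z := conj z)
      (hAne.image _) ?_ (mem_image_of_mem _ hpB) (by simp [hre]) (by simp [him, hneg])
      (by simp [him, hge]) ?_
    · rintro _ ⟨a, ha, rfl⟩
      simpa using (hAup a ha).le
    · rw [infDist_image isometry_conj, infDist_image isometry_conj, heq]

end Complex

theorem equidistant_vertical_homotopy_general
    (A B : Set ℂ)
    (hAne : A.Nonempty) (hBne : B.Nonempty)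
    (hAup : ∀ z ∈ A, 0 < z.im) (hBlow : ∀ z ∈ B, z.im < 0) :
    (∀ z : ℂ, Metric.infDist z A = Metric.infDist z B → 0 < z.im →
      ∀ s ∈ Set.Icc (0:ℝ) z.im, ((z.re : ℂ) + (s : ℂ) * Complex.I) ∉ A ∪ B) ∧
    (∀ z : ℂ, Metric.infDist z A = Metric.infDist z B →
      ∀ s ∈ Set.Icc (0:ℝ) 1,
        ((z.re : ℂ) + ((1 - s) * z.im : ℂ) * Complex.I) ∉ A ∪ B) := by
  refine ⟨fun z heq _ s hs => ?_, fun z heq s hs => ?_⟩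
  · exact Complex.ofReal_add_mul_I_notMem_of_infDist_eq hAne hBne hAup hBlow heq
      (Icc_subset_uIcc hs)
  · have hmem : (1 - s) * z.im ∈ uIcc 0 z.im := by
      rw [← segment_eq_uIcc]
      exact ⟨s, 1 - s, hs.1, by linarith [hs.2], by ring, by simp⟩
    exact_mod_cast Complex.ofReal_add_mul_I_notMem_of_infDist_eq hAne hBne hAup hBlow heq hmem

theorem equidistant_vertical_homotopy
    (A B : Set ℂ) (hA : IsClosed A) (hB : IsClosed B)
    (hAne : A.Nonempty) (hBne : B.Nonempty)
    (hAup : ∀ z ∈ A, 0 < z.im) (hBlow : ∀ z ∈ B, z.im < 0) :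
    (∀ z : ℂ, Metric.infDist z A = Metric.infDist z B → 0 < z.im →
      ∀ s ∈ Set.Icc (0:ℝ) z.im, ((z.re : ℂ) + (s : ℂ) * Complex.I) ∉ A ∪ B) ∧
    (∀ z : ℂ, Metric.infDist z A = Metric.infDist z B →
      ∀ s ∈ Set.Icc (0:ℝ) 1,
        ((z.re : ℂ) + ((1 - s) * z.im : ℂ) * Complex.I) ∉ A ∪ B) :=
  equidistant_vertical_homotopy_general A B hAne hBne hAup hBlow
end
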